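/- arXiv:1304.5438 — 2 statements merged into one kernel-verified Lean document; each statement's English description precedes it below -/
import Mathlib

section
/- Let (G,v₀,W) be a Banach–Mazur game on a finite graph and let P be a reasonable probability measure on Paths(G,v₀). If Player 0 has a winning α-strategy for (G,v₀,W) for some α > 0, then P(W) = 1. -/
open MeasureTheory
open scoped ENNReal NNReal

namespace BMGame

variable {V : Type*}

/-- The prefix of length `n` of the infinite sequence `ρ`. -/
def pref (ρ : ℕ → V) (n : ℕ) : List V := (List.range n).map ρ

/-- `ρ` is an infinite path of the graph `E` starting at `v₀`. -/
def IsPlay (E : V → V → Prop) (v₀ : V) (ρ : ℕ → V) : Prop :=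
  ρ 0 = v₀ ∧ ∀ n, E (ρ n) (ρ (n + 1))

/-- `π` is a nonempty finite path of the graph `E` starting at `v₀` (a position of the game). -/
def IsPos (E : V → V → Prop) (v₀ : V) (π : List V) : Prop :=
  π.head? = some v₀ ∧ π.Chain' E

/-- A strategy for player 0 assigns to each position the (nonempty) block of vertices
appended by player 0's move; `(π ++ f π).Chain' E` says that this block is a path
starting at the last vertex of `π`. -/
def IsStrategy (E : V → V → Prop) (v₀ : V) (f : List V → List V) : Prop :=
  ∀ π, IsPos E v₀ π → f π ≠ [] ∧ (π ++ f π).Chain' E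

/-- The play `ρ` is consistent with the strategy `f`: there are cut points
`c 0, c 1, …` (the lengths of the prefixes built after each move of player 1) such that
after each such prefix player 0 plays according to `f`, and player 1 then appends a
nonempty block. -/
def ConsGen (f : List V → List V) (ρ : ℕ → V) : Prop :=
  ∃ c : ℕ → ℕ, 1 ≤ c 0 ∧ ∀ i,
    pref ρ (c i + (f (pref ρ (c i))).length) = pref ρ (c i) ++ f (pref ρ (c i)) ∧
    c i + (f (pref ρ (c i))).length < c (i + 1)

/-- `f` is a winning strategy for player 0 in the Banach–Mazur game `(E, v₀, W)`. -/
def WinningStrategy (E : V → V → Prop) (v₀ : V) (W : Set (ℕ → V))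
    (f : List V → List V) : Prop :=
  IsStrategy E v₀ f ∧ ∀ ρ, IsPlay E v₀ ρ → ConsGen f ρ → ρ ∈ W

/-- The strategy `f` is `b`-bounded: each of its moves has length at most `b`. -/
def BoundedBy (E : V → V → Prop) (v₀ : V) (b : ℕ) (f : List V → List V) : Prop :=
  ∀ π, IsPos E v₀ π → (f π).length ≤ b

/-- A positional strategy assigns to each vertex the nonempty block appended. -/
def IsPositional (E : V → V → Prop) (f : V → List V) : Prop :=
  ∀ v, f v ≠ [] ∧ (v :: f v).Chain' E

/-- Consistency with a positional strategy: after each prefix chosen by player 1,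
player 0 plays `f` of the current (last) vertex. -/
def ConsPositional (f : V → List V) (ρ : ℕ → V) : Prop :=
  ∃ c : ℕ → ℕ, 1 ≤ c 0 ∧ ∀ i,
    pref ρ (c i + (f (ρ (c i - 1))).length) = pref ρ (c i) ++ f (ρ (c i - 1)) ∧
    c i + (f (ρ (c i - 1))).length < c (i + 1)

def PositionalWinning (E : V → V → Prop) (v₀ : V) (W : Set (ℕ → V)) (f : V → List V) : Prop :=
  IsPositional E f ∧ ∀ ρ, IsPlay E v₀ ρ → ConsPositional f ρ → ρ ∈ W

/-- Structural requirement shared by move-counting and length-counting strategies: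
for `n ≥ 1`, `h v n` is a nonempty block forming a path from `v`. -/
def IsCountingStrategy (E : V → V → Prop) (h : V → ℕ → List V) : Prop :=
  ∀ v n, 1 ≤ n → h v n ≠ [] ∧ (v :: h v n).Chain' E

/-- Consistency with a move-counting strategy: at its `i`-th move (`i ≥ 1`) player 0 plays
`h (current vertex) i`. -/
def ConsMoveCounting (h : V → ℕ → List V) (ρ : ℕ → V) : Prop :=
  ∃ c : ℕ → ℕ, 1 ≤ c 0 ∧ ∀ i,
    pref ρ (c i + (h (ρ (c i - 1)) (i + 1)).length) = pref ρ (c i) ++ h (ρ (c i - 1)) (i + 1) ∧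
    c i + (h (ρ (c i - 1)) (i + 1)).length < c (i + 1)

def MoveCountingWinning (E : V → V → Prop) (v₀ : V) (W : Set (ℕ → V))
    (h : V → ℕ → List V) : Prop :=
  IsCountingStrategy E h ∧ ∀ ρ, IsPlay E v₀ ρ → ConsMoveCounting h ρ → ρ ∈ W

/-- Consistency with a length-counting strategy: after a prefix of length `c i`
player 0 plays `h (current vertex) (c i)`. -/
def ConsLengthCounting (h : V → ℕ → List V) (ρ : ℕ → V) : Prop :=
  ∃ c : ℕ → ℕ, 1 ≤ c 0 ∧ ∀ i,
    pref ρ (c i + (h (ρ (c i - 1)) (c i)).length) = pref ρ (c i) ++ h (ρ (c i - 1)) (c i) ∧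
    c i + (h (ρ (c i - 1)) (c i)).length < c (i + 1)

def LengthCountingWinning (E : V → V → Prop) (v₀ : V) (W : Set (ℕ → V))
    (h : V → ℕ → List V) : Prop :=
  IsCountingStrategy E h ∧ ∀ ρ, IsPlay E v₀ ρ → ConsLengthCounting h ρ → ρ ∈ W

/-- The segment `ρ a, ρ (a+1), …, ρ (b-1)` of an infinite sequence. -/
def seg (ρ : ℕ → V) (a b : ℕ) : List V := (List.range (b - a)).map fun j => ρ (a + j)

/-- A last-move strategy is defined on all nonempty finite paths of the graph. -/
def IsLastMove (E : V → V → Prop) (g : List V → List V) : Prop :=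
  ∀ π, π ≠ [] → π.Chain' E → g π ≠ [] ∧ (π ++ g π).Chain' E

/-- Consistency with the last-move strategy `g`: the play decomposes as
`π₁ g(π₁) π₂ g(π₂) ⋯` where the `πᵢ` are the (nonempty) moves of player 1. -/
def ConsLastMove (g : List V → List V) (ρ : ℕ → V) : Prop :=
  ∃ s e : ℕ → ℕ, s 0 = 0 ∧ (∀ i, s i < e i) ∧ ∀ i,
    seg ρ (e i) (e i + (g (seg ρ (s i) (e i))).length) = g (seg ρ (s i) (e i)) ∧
    s (i + 1) = e i + (g (seg ρ (s i) (e i))).length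

def LastMoveWinning (E : V → V → Prop) (v₀ : V) (W : Set (ℕ → V)) (g : List V → List V) : Prop :=
  IsLastMove E g ∧ ∀ ρ, IsPlay E v₀ ρ → ConsLastMove g ρ → ρ ∈ W

/-- The cylinder generated by the finite word `π`. -/
def Cyl (π : List V) : Set (ℕ → V) := {ρ | pref ρ π.length = π}

/-- One-step transition probabilities obtained from the weights `w`. -/
noncomputable def transP [Fintype V] (E : V → V → Prop) (w : V → V → ℝ≥0) (u v : V) : ℝ≥0∞ := by
  classical
  exact if E u v then
    (w u v : ℝ≥0∞) / ∑ x ∈ Finset.univ.filter (fun x => E u x), (w u x : ℝ≥0∞)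
  else 0

/-- The probability of the cylinder generated by a finite word: the product of the
one-step transition probabilities along it. -/
noncomputable def pathP [Fintype V] (E : V → V → Prop) (w : V → V → ℝ≥0) (π : List V) : ℝ≥0∞ :=
  ((π.zip π.tail).map fun q => transP E w q.1 q.2).prod

/-- `P` is the reasonable probability measure associated with the weights `w`. -/
def IsReasonable [Fintype V] [MeasurableSpace (ℕ → V)] (E : V → V → Prop) (v₀ : V)
    (w : V → V → ℝ≥0) (P : Measure (ℕ → V)) : Prop :=
  IsProbabilityMeasure P ∧ ∀ π : List V, π.head? = some v₀ → P (Cyl π) = pathP E w π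

/-- `Ps` is a legal move of player 0 in the generalised game `G_α` at position `π`: a
finite nonempty set of nonempty finite paths from the last vertex of `π` whose union of
cylinders has conditional probability at least `α` given `Cyl π`. -/
def LegalProposal [MeasurableSpace (ℕ → V)] (E : V → V → Prop) (P : Measure (ℕ → V)) (α : ℝ)
    (π : List V) (Ps : Finset (List V)) : Prop :=
  Ps.Nonempty ∧ (∀ τ ∈ Ps, τ ≠ [] ∧ (π ++ τ).Chain' E) ∧
    ENNReal.ofReal α ≤ P (⋃ τ ∈ Ps, Cyl (π ++ τ)) / P (Cyl π)

/-- An α-strategy for player 0. -/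
def IsAlphaStrategy [MeasurableSpace (ℕ → V)] (E : V → V → Prop) (v₀ : V) (P : Measure (ℕ → V))
    (α : ℝ) (f : List V → Finset (List V)) : Prop :=
  ∀ π, IsPos E v₀ π → LegalProposal E P α π (f π)

/-- Consistency with an α-strategy: at each stage, player 1 picks some element of the
set proposed by player 0 and appends a nonempty block after it. -/
def ConsAlpha (f : List V → Finset (List V)) (ρ : ℕ → V) : Prop :=
  ∃ c : ℕ → ℕ, 1 ≤ c 0 ∧ ∀ i, ∃ τ ∈ f (pref ρ (c i)),
    pref ρ (c i + τ.length) = pref ρ (c i) ++ τ ∧ c i + τ.length < c (i + 1)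

def AlphaWinning [MeasurableSpace (ℕ → V)] (E : V → V → Prop) (v₀ : V) (P : Measure (ℕ → V))
    (α : ℝ) (W : Set (ℕ → V)) (f : List V → Finset (List V)) : Prop :=
  IsAlphaStrategy E v₀ P α f ∧ ∀ ρ, IsPlay E v₀ ρ → ConsAlpha f ρ → ρ ∈ W

/-- A strategy for player 1 in the generalised game `G_α` consists of an initial path and,
for each position together with a legal proposal of player 0, the selected element of the
proposal and the next (nonempty) block played by player 1. -/
def IsP1Strategy [MeasurableSpace (ℕ → V)] (E : V → V → Prop) (v₀ : V) (P : Measure (ℕ → V))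
    (α : ℝ) (init : List V) (g : List V → Finset (List V) → List V × List V) : Prop :=
  IsPos E v₀ init ∧
    ∀ π Ps, IsPos E v₀ π → LegalProposal E P α π Ps →
      (g π Ps).1 ∈ Ps ∧ (g π Ps).2 ≠ [] ∧ (π ++ ((g π Ps).1 ++ (g π Ps).2)).Chain' E

/-- Consistency of a play with player 1's strategy `(init, g)`:
there is a sequence of legal proposals of player 0 generating the play. -/
def ConsP1 [MeasurableSpace (ℕ → V)] (E : V → V → Prop) (P : Measure (ℕ → V)) (α : ℝ)
    (init : List V) (g : List V → Finset (List V) → List V × List V) (ρ : ℕ → V) : Prop :=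
  ∃ (Ps : ℕ → Finset (List V)) (p : ℕ → List V), p 0 = init ∧
    (∀ n, pref ρ (p n).length = p n) ∧
    ∀ n, LegalProposal E P α (p n) (Ps n) ∧
      p (n + 1) = p n ++ ((g (p n) (Ps n)).1 ++ (g (p n) (Ps n)).2)

def P1Winning [MeasurableSpace (ℕ → V)] (E : V → V → Prop) (v₀ : V) (P : Measure (ℕ → V))
    (α : ℝ) (W : Set (ℕ → V)) (init : List V)
    (g : List V → Finset (List V) → List V × List V) : Prop :=
  IsP1Strategy E v₀ P α init g ∧ ∀ ρ, IsPlay E v₀ ρ → ConsP1 E P α init g ρ → ρ ∉ W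

/-- A union of cylinders, i.e. an open subset of the space of sequences. -/
def IsCylOpen (U : Set (ℕ → V)) : Prop :=
  ∃ S : Set (List V), U = ⋃ π ∈ S, Cyl π

/-- `W` is a countable intersection of open subsets of the space `Paths (G, v₀)`. -/
def IsCountableInterOfOpens (E : V → V → Prop) (v₀ : V) (W : Set (ℕ → V)) : Prop :=
  ∃ U : ℕ → Set (ℕ → V), (∀ n, IsCylOpen (U n)) ∧
    W = {ρ | IsPlay E v₀ ρ} ∩ ⋂ n, U n

/-- For every `n`, the concatenation of the blocks `u 0, …, u (n-1)` is a prefix of `ρ`. -/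
def AgreesWithBlocks (ρ : ℕ → V) (u : ℕ → List V) : Prop :=
  ∀ n, pref ρ (((List.range n).map u).flatten).length = ((List.range n).map u).flatten

end BMGame

/-!
Call a play *avoiding from `N`* if from time `N` on it never follows any proposal of the
α-strategy `f`. A proposal made at a position `π` is a finite union of cylinders below `Cyl π`
of conditional probability at least `α`, so its complement in `Cyl π` is a finite disjoint union
of longer cylinders carrying at most a `1 - α` fraction of the mass. Iterating, the avoiding
plays have measure at most `(1 - α) ^ k` for every `k`, hence measure zero. Every other infinite
path of the graph follows proposals infinitely often, is therefore consistent with `f`, and lies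
in `W`; and the sequences that are not paths form a null set for a reasonable measure.
-/

namespace BMGame

open Function

variable {V : Type*}

@[simp] lemma pref_length (ρ : ℕ → V) (n : ℕ) : (pref ρ n).length = n := by
  simp [pref]

lemma pref_take (ρ : ℕ → V) {k n : ℕ} (h : k ≤ n) : (pref ρ n).take k = pref ρ k := by
  simp [pref, ← List.map_take, List.take_range, Nat.min_eq_left h]

lemma pref_add (ρ : ℕ → V) (n m : ℕ) :
    pref ρ (n + m) = pref ρ n ++ List.ofFn (fun i : Fin m => ρ (n + i)) := by
  rw [pref, pref, List.range_add, List.map_append, List.map_map]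
  congr 1
  exact List.ext_getElem (by simp) fun i _ _ => by simp

lemma mem_Cyl_pref (ρ : ℕ → V) (n : ℕ) : ρ ∈ Cyl (pref ρ n) := by
  simp [Cyl]

lemma Cyl_anti {l₁ l₂ : List V} (h : l₁ <+: l₂) : Cyl l₂ ⊆ Cyl l₁ := fun ρ hρ => by
  change pref ρ _ = _
  rw [← pref_take ρ h.length_le, hρ, ← List.prefix_iff_eq_take.mp h]

lemma isPrefix_of_mem_Cyl {ρ : ℕ → V} {l₁ l₂ : List V} (h₁ : ρ ∈ Cyl l₁) (h₂ : ρ ∈ Cyl l₂)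
    (hl : l₁.length ≤ l₂.length) : l₁ <+: l₂ := by
  rw [List.prefix_iff_eq_take, ← h₂, pref_take ρ hl]
  exact h₁.symm

lemma mem_Cyl_append_ofFn {ρ : ℕ → V} {π : List V} (h : ρ ∈ Cyl π) (L : ℕ) :
    ρ ∈ Cyl (π ++ List.ofFn fun i : Fin L => ρ (π.length + i)) := by
  change pref ρ _ = _
  rw [List.length_append, List.length_ofFn, pref_add, h]

lemma pairwise_disjoint_Cyl_append (π : List V) (L : ℕ) :
    Pairwise (Disjoint on fun x : Fin L → V => Cyl (π ++ List.ofFn x)) := by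
  intro x y hxy
  refine Set.disjoint_left.mpr fun ρ hx hy => hxy ?_
  have := (isPrefix_of_mem_Cyl hx hy (by simp)).eq_of_length (by simp)
  exact List.ofFn_injective (List.append_cancel_left this)

@[simp] lemma Cyl_nil : Cyl ([] : List V) = Set.univ := by
  ext ρ
  simp [Cyl, pref]

lemma Cyl_singleton (v : V) : Cyl [v] = {ρ | ρ 0 = v} := by
  ext ρ
  simp [Cyl, pref]

lemma measurableSet_Cyl [MeasurableSpace V] [DiscreteMeasurableSpace V] (π : List V) :
    MeasurableSet (Cyl π) := by
  have : Cyl π = ⋂ i : Fin π.length, {ρ : ℕ → V | ρ i = π[i]} := by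
    ext ρ
    simp [Cyl, pref, List.ext_get_iff, Fin.forall_iff]
  rw [this]
  exact MeasurableSet.iInter fun i => measurable_pi_apply _ (measurableSet_singleton _)

lemma isPlay_of_forall_isPos_pref {E : V → V → Prop} {v₀ : V} {ρ : ℕ → V}
    (h : ∀ n, IsPos E v₀ (pref ρ (n + 1))) : IsPlay E v₀ ρ := by
  refine ⟨by simpa [pref] using (h 0).1, fun n => ?_⟩
  have := List.isChain_iff_getElem.mp (h (n + 1)).2 n (by simp)
  simpa [pref] using this

lemma pathP_eq_zero_of_not_isChain [Fintype V] {E : V → V → Prop} {w : V → V → ℝ≥0} :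
    ∀ {π : List V}, ¬ π.IsChain E → pathP E w π = 0
  | [], h => (h List.isChain_nil).elim
  | [_], h => (h (List.isChain_singleton _)).elim
  | u :: v :: l, h => by
    change transP E w u v * pathP E w (v :: l) = 0
    rcases not_and_or.mp (mt List.isChain_cons_cons.mpr h) with huv | hl
    · simp [transP, huv]
    · rw [pathP_eq_zero_of_not_isChain hl, mul_zero]

def MatchesAt (f : List V → Finset (List V)) (ρ : ℕ → V) (n : ℕ) : Prop :=
  ∃ τ ∈ f (pref ρ n), ρ ∈ Cyl (pref ρ n ++ τ)

def AvoidsFrom (f : List V → Finset (List V)) (N : ℕ) : Set (ℕ → V) :=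
  {ρ | ∀ m, N ≤ m → ¬ MatchesAt f ρ m}

lemma consAlpha_of_forall_exists_matchesAt {f : List V → Finset (List V)} {ρ : ℕ → V}
    (h : ∀ N, ∃ m, N ≤ m ∧ MatchesAt f ρ m) : ConsAlpha f ρ := by
  choose g hg τ hτ hρτ using h
  -- `s (i + 1)` lies beyond the end of the proposal matched at time `g (s i)`
  let s : ℕ → ℕ := fun i => Nat.rec 1 (fun _ n => g n + (τ n).length + 1) i
  refine ⟨fun i => g (s i), hg 1, fun i => ⟨τ (s i), hτ _, by simpa [Cyl] using hρτ (s i), ?_⟩⟩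
  exact (hg (s (i + 1))).trans_lt' (by simp [s])

section Measure

variable [MeasurableSpace V] {P : Measure (ℕ → V)}

lemma measure_inter_Cyl_le_of_subset_biUnion {S : Set (ℕ → V)} {π : List V} {L : ℕ}
    {B : Finset (Fin L → V)} {c : ℝ≥0∞}
    (hcover : S ∩ Cyl π ⊆ ⋃ x ∈ B, Cyl (π ++ List.ofFn x))
    (hc : ∀ x ∈ B, P (S ∩ Cyl (π ++ List.ofFn x)) ≤ c * P (Cyl (π ++ List.ofFn x))) :
    P (S ∩ Cyl π) ≤ c * ∑ x ∈ B, P (Cyl (π ++ List.ofFn x)) := calc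
  P (S ∩ Cyl π) ≤ P (⋃ x ∈ B, S ∩ Cyl (π ++ List.ofFn x)) := measure_mono fun ρ hρ => by
      obtain ⟨x, hx, hρx⟩ := Set.mem_iUnion₂.mp (hcover hρ)
      exact Set.mem_iUnion₂.mpr ⟨x, hx, hρ.1, hρx⟩
  _ ≤ ∑ x ∈ B, P (S ∩ Cyl (π ++ List.ofFn x)) := measure_biUnion_finset_le _ _
  _ ≤ ∑ x ∈ B, c * P (Cyl (π ++ List.ofFn x)) := Finset.sum_le_sum hc
  _ = c * ∑ x ∈ B, P (Cyl (π ++ List.ofFn x)) := (Finset.mul_sum _ _ _).symm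

variable [DiscreteMeasurableSpace V]

lemma measure_biUnion_Cyl_append (P : Measure (ℕ → V)) (π : List V) {L : ℕ}
    (B : Finset (Fin L → V)) :
    P (⋃ x ∈ B, Cyl (π ++ List.ofFn x)) = ∑ x ∈ B, P (Cyl (π ++ List.ofFn x)) :=
  measure_biUnion_finset ((pairwise_disjoint_Cyl_append π L).set_pairwise _)
    fun _ _ => measurableSet_Cyl _

variable [Fintype V]

/-- Every `τ ∈ Ps` has length at most `L`, so each cylinder `Cyl (π ++ x)` with `|x| = L`
either lies inside `⋃ τ ∈ Ps, Cyl (π ++ τ)` or misses it. -/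
lemma exists_finset_Cyl_cover_diff [IsFiniteMeasure P] (π : List V) (Ps : Finset (List V)) :
    ∃ L, ∃ B : Finset (Fin L → V),
      Cyl π \ ⋃ τ ∈ Ps, Cyl (π ++ τ) ⊆ ⋃ x ∈ B, Cyl (π ++ List.ofFn x) ∧
      ∑ x ∈ B, P (Cyl (π ++ List.ofFn x)) ≤ P (Cyl π) - P (⋃ τ ∈ Ps, Cyl (π ++ τ)) := by
  classical
  set U := ⋃ τ ∈ Ps, Cyl (π ++ τ)
  let L := Ps.sup List.length
  refine ⟨L, Finset.univ.filter fun x => ¬ Cyl (π ++ List.ofFn x) ⊆ U, ?_, ?_⟩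
  · rintro ρ ⟨hπ, hU⟩
    refine Set.mem_biUnion (x := fun i : Fin L => ρ (π.length + i)) ?_ (mem_Cyl_append_ofFn hπ L)
    simpa using fun h => hU (h (mem_Cyl_append_ofFn hπ L))
  have hUπ : U ⊆ Cyl π := Set.iUnion₂_subset fun τ _ => Cyl_anti (List.prefix_append π τ)
  have hU : MeasurableSet U := Finset.measurableSet_biUnion _ fun τ _ => measurableSet_Cyl _
  rw [← measure_biUnion_Cyl_append, ← measure_sdiff hUπ hU.nullMeasurableSet (measure_ne_top P U)]
  refine measure_mono (Set.iUnion₂_subset fun x hx ρ hρ => ?_)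
  refine ⟨Cyl_anti (List.prefix_append _ _) hρ, fun hρU => ?_⟩
  obtain ⟨τ, hτ, hρτ⟩ := Set.mem_iUnion₂.mp hρU
  have hle : (π ++ τ).length ≤ (π ++ List.ofFn x).length := by simpa using Finset.le_sup hτ
  exact (Finset.mem_filter.mp hx).2 ((Cyl_anti (isPrefix_of_mem_Cyl hρτ hρ hle)).trans
    (Set.subset_iUnion₂ (s := fun τ _ => Cyl (π ++ τ)) τ hτ))

section Reasonable

variable {E : V → V → Prop} {v₀ : V} {w : V → V → ℝ≥0}

lemma measure_Cyl_eq_zero_of_not_isPos (hP : IsReasonable E v₀ w P) {π : List V} (hπ : π ≠ [])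
    (h : ¬ IsPos E v₀ π) : P (Cyl π) = 0 := by
  obtain ⟨_, hcyl⟩ := hP
  obtain ⟨a, l, rfl⟩ := List.exists_cons_of_ne_nil hπ
  by_cases ha : a = v₀
  · subst ha
    rw [hcyl _ rfl, pathP_eq_zero_of_not_isChain fun hc => h ⟨rfl, hc⟩]
  · have hsub : Cyl (a :: l) ⊆ (Cyl [v₀])ᶜ := fun ρ hρ hρ₀ => by
      have hρa := Cyl_anti (List.prefix_append [a] l) hρ
      rw [Cyl_singleton] at hρa hρ₀
      exact ha (hρa.symm.trans hρ₀)
    exact measure_mono_null hsub ((prob_compl_eq_zero_iff (measurableSet_Cyl _)).mpr (hcyl _ rfl))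

lemma measure_not_isPlay (hP : IsReasonable E v₀ w P) : P {ρ | ¬ IsPlay E v₀ ρ} = 0 := by
  have hsub : {ρ | ¬ IsPlay E v₀ ρ} ⊆ ⋃ π ∈ {π : List V | π ≠ [] ∧ ¬ IsPos E v₀ π}, Cyl π := by
    intro ρ hρ
    obtain ⟨n, hn⟩ : ∃ n, ¬ IsPos E v₀ (pref ρ (n + 1)) := by
      by_contra! h
      exact hρ (isPlay_of_forall_isPos_pref h)
    exact Set.mem_biUnion ⟨by simp [← List.length_pos_iff], hn⟩ (mem_Cyl_pref ρ _)
  refine measure_mono_null hsub ((measure_biUnion_null_iff (Set.to_countable _)).mpr ?_)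
  exact fun π hπ => measure_Cyl_eq_zero_of_not_isPos hP hπ.1 hπ.2

variable {f : List V → Finset (List V)} {α : ℝ}

lemma measure_avoidsFrom_inter_Cyl_le (hP : IsReasonable E v₀ w P)
    (hf : IsAlphaStrategy E v₀ P α f) (N k : ℕ) {π : List V} (hπ : π ≠ []) (hN : N ≤ π.length) :
    P (AvoidsFrom f N ∩ Cyl π) ≤ (1 - ENNReal.ofReal α) ^ k * P (Cyl π) := by
  have := hP.1
  induction k generalizing π with
  | zero => simpa using measure_mono Set.inter_subset_right
  | succ k ih =>
    by_cases hpos : IsPos E v₀ π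
    case neg =>
      have h0 := measure_Cyl_eq_zero_of_not_isPos hP hπ hpos
      rw [h0, mul_zero]
      exact (measure_mono_null Set.inter_subset_right h0).le
    set U := ⋃ τ ∈ f π, Cyl (π ++ τ)
    have hU : ENNReal.ofReal α * P (Cyl π) ≤ P U :=
      ENNReal.mul_le_of_le_div (hf π hpos).2.2
    obtain ⟨L, B, hcover, hsum⟩ := exists_finset_Cyl_cover_diff (P := P) π (f π)
    have hAU : AvoidsFrom f N ∩ Cyl π ⊆ Cyl π \ U := fun ρ ⟨hρA, hρπ⟩ =>
      ⟨hρπ, fun hρU => hρA π.length hN (by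
        rw [MatchesAt, show pref ρ π.length = π from hρπ]
        simpa [U] using hρU)⟩
    calc P (AvoidsFrom f N ∩ Cyl π)
        ≤ (1 - ENNReal.ofReal α) ^ k * ∑ x ∈ B, P (Cyl (π ++ List.ofFn x)) :=
          measure_inter_Cyl_le_of_subset_biUnion (hAU.trans hcover)
            fun x _ => ih (by simp [hπ]) (by simp; omega)
      _ ≤ (1 - ENNReal.ofReal α) ^ k * (P (Cyl π) - ENNReal.ofReal α * P (Cyl π)) := by
          gcongr
          exact hsum.trans (tsub_le_tsub_left hU _)
      _ = (1 - ENNReal.ofReal α) ^ (k + 1) * P (Cyl π) := by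
          rw [pow_succ, mul_assoc, ENNReal.sub_mul fun _ _ => measure_ne_top P _, one_mul]

lemma measure_avoidsFrom (hP : IsReasonable E v₀ w P) (hα : 0 < α)
    (hf : IsAlphaStrategy E v₀ P α f) (N : ℕ) : P (AvoidsFrom f N) = 0 := by
  have := hP.1
  have hle : ∀ k, P (AvoidsFrom f N) ≤ (1 - ENNReal.ofReal α) ^ k := fun k => by
    have hcover : AvoidsFrom f N ∩ Cyl [] ⊆
        ⋃ x ∈ (Finset.univ : Finset (Fin (N + 1) → V)), Cyl ([] ++ List.ofFn x) :=
      fun ρ _ => Set.mem_biUnion (Finset.mem_coe.mpr (Finset.mem_univ _))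
        (mem_Cyl_append_ofFn (by simp) (N + 1))
    calc P (AvoidsFrom f N) = P (AvoidsFrom f N ∩ Cyl []) := by simp
      _ ≤ (1 - ENNReal.ofReal α) ^ k * ∑ x : Fin (N + 1) → V, P (Cyl ([] ++ List.ofFn x)) :=
          measure_inter_Cyl_le_of_subset_biUnion hcover
            fun x _ => measure_avoidsFrom_inter_Cyl_le hP hf N k (by simp) (by simp)
      _ ≤ (1 - ENNReal.ofReal α) ^ k := by
          rw [← measure_biUnion_Cyl_append]
          exact mul_le_of_le_one_right' prob_le_one
  have hlt : 1 - ENNReal.ofReal α < 1 :=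
    ENNReal.sub_lt_self ENNReal.one_ne_top one_ne_zero (ENNReal.ofReal_pos.mpr hα).ne'
  exact le_antisymm (ge_of_tendsto' (ENNReal.tendsto_pow_atTop_nhds_zero_of_lt_one hlt) hle)
    bot_le

end Reasonable

end Measure

end BMGame

open BMGame

theorem stmt12_general {V : Type*} [Fintype V] [MeasurableSpace V] [DiscreteMeasurableSpace V]
    (E : V → V → Prop) (v₀ : V) (W : Set (ℕ → V)) (w : V → V → ℝ≥0)
    (P : MeasureTheory.Measure (ℕ → V)) (hP : IsReasonable E v₀ w P)
    (halpha : ∃ α : ℝ, 0 < α ∧ ∃ f : List V → Finset (List V), AlphaWinning E v₀ P α W f) :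
    P Wᶜ = 0 := by
  obtain ⟨α, hα, f, hf, hwin⟩ := halpha
  have hsub : Wᶜ ⊆ {ρ | ¬ IsPlay E v₀ ρ} ∪ ⋃ N, AvoidsFrom f N := by
    intro ρ hρW
    by_contra h
    simp only [Set.mem_union, Set.mem_ofPred_eq, Set.mem_iUnion, AvoidsFrom, not_or, not_exists,
      not_forall, not_not, exists_prop] at h
    exact hρW (hwin ρ h.1 (consAlpha_of_forall_exists_matchesAt h.2))
  exact measure_mono_null hsub
    (measure_union_null (measure_not_isPlay hP) (measure_iUnion_null (measure_avoidsFrom hP hα hf)))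

/-- If Player 0 has a winning α-strategy for `(G, v₀, W)` for some `α > 0`, then
`P (W) = 1`. -/
theorem stmt12 {V : Type*} [Fintype V] [MeasurableSpace V] [DiscreteMeasurableSpace V]
    (E : V → V → Prop) (hE : ∀ v, ∃ u, E v u) (v₀ : V)
    (W : Set (ℕ → V)) (hW : W ⊆ {ρ | IsPlay E v₀ ρ})
    (w : V → V → ℝ≥0) (hw : ∀ u v, E u v → 0 < w u v)
    (P : MeasureTheory.Measure (ℕ → V)) (hP : IsReasonable E v₀ w P)
    (halpha : ∃ α : ℝ, 0 < α ∧ ∃ f : List V → Finset (List V), AlphaWinning E v₀ P α W f) :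
    P Wᶜ = 0 :=
  stmt12_general E v₀ W w P hP halpha
end

section
/- There exists a function φ from the nonempty finite words over {0,1,2} to {0,1} such that, for W_φ = {π₁φ(π₁)π₂φ(π₂)π₃φ(π₃)⋯ : each πᵢ is a nonempty finite word over {0,1,2} and π₁ starts with 2} ⊆ Paths(G_{0,1,2},2), Player 0 has a 1-bounded last-move winning strategy for the Banach–Mazur game (G_{0,1,2}, 2, W_φ), but Player 0 has no positional winning strategy for this game. -/
open MeasureTheory
open scoped ENNReal NNReal

open BMGame

/-- The complete directed graph on `{0,1,2}` (all edges, including self-loops). -/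
def E3 : Fin 3 → Fin 3 → Prop := fun _ _ => True

/-- The winning condition determined by `φ`: infinite sequences of the form
`π₁ φ(π₁) π₂ φ(π₂) ⋯` where each `πᵢ` is a nonempty finite word over `{0,1,2}`
and `π₁` starts with `2`. -/
def W18 (φ : List (Fin 3) → Fin 3) : Set (ℕ → Fin 3) :=
  {ρ | ∃ π : ℕ → List (Fin 3), (∀ i, π i ≠ []) ∧ (π 0).head? = some 2 ∧
    AgreesWithBlocks ρ fun i => π i ++ [φ (π i)]}

/-!
A word `τ` *predicts* the letter `(decodeWord m)[j]` when it ends with `2^m` followed by the first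
`j` letters of `decodeWord m`, and `2^m` is its longest run of `2`s; such a reading is unique, and
`φ τ ∈ {0, 1}` is chosen different from the predicted letter. Playing `φ` of Player 1's last
move is a last-move winning strategy by the very definition of `W_φ`.

Against a positional strategy `f`, write `f 2 = 2^a w 2^b` with `w` neither starting nor
ending with `2`, and choose `m` large with `decodeWord m = w`. If Player 1 always moves `2^(m-a-b)`,
the play is a shift of the periodic word `(2^m w)^ω`. In a decomposition `π₁ φ(π₁) π₂ ⋯` of it
the letters `φ(πᵢ) ≠ 2` lie in copies of `w`, so some `πᵢ₊₁` contains a whole block `2^m`; it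
then predicts exactly the letter `φ(πᵢ₊₁)` that follows it, which is impossible.
-/

open List

namespace BMGame

section Segments

variable {V : Type*} (ρ : ℕ → V)

theorem seg_eq_map_range' (a b : ℕ) : seg ρ a b = (range' a (b - a)).map ρ := by
  simp [seg, range'_eq_map_range]

@[simp]
theorem length_seg (a b : ℕ) : (seg ρ a b).length = b - a := by
  simp [seg]

@[simp]
theorem getElem_seg {a b i : ℕ} (h : i < (seg ρ a b).length) : (seg ρ a b)[i] = ρ (a + i) := by
  simp [seg]

@[simp]
theorem length_pref (n : ℕ) : (pref ρ n).length = n := by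
  simp [pref]

theorem pref_eq_seg (n : ℕ) : pref ρ n = seg ρ 0 n := by
  simp [pref, seg]

theorem seg_append {a b c : ℕ} (hab : a ≤ b) (hbc : b ≤ c) :
    seg ρ a b ++ seg ρ b c = seg ρ a c := by
  have h := range'_append (s := a) (m := b - a) (n := c - b) (step := 1)
  rw [one_mul, Nat.add_sub_cancel' hab, show b - a + (c - b) = c - a by omega] at h
  rw [seg_eq_map_range', seg_eq_map_range', seg_eq_map_range', ← map_append, h]

theorem seg_add_one {a b : ℕ} (h : a ≤ b) : seg ρ a (b + 1) = seg ρ a b ++ [ρ b] := by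
  rw [← seg_append ρ h b.le_succ]
  simp [seg]

theorem pref_add_s18 (n k : ℕ) : pref ρ (n + k) = pref ρ n ++ seg ρ n (n + k) := by
  rw [pref_eq_seg, pref_eq_seg, seg_append ρ n.zero_le (n.le_add_right k)]

theorem seg_comp_add (k a b : ℕ) : seg (fun i => ρ (i + k)) a b = seg ρ (a + k) (b + k) := by
  simp only [seg, Nat.add_sub_add_right, Nat.add_right_comm]

variable {ρ} {u : ℕ → List V}

theorem not_replicate_infix_seg {x : V} {m : ℕ}
    (hrun : ∀ p, ∃ l ≤ m, ρ (p + l) ≠ x) (a b : ℕ) : ¬ replicate (m + 1) x <:+: seg ρ a b := by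
  rw [infix_iff_getElem?]
  rintro ⟨k, hk, hget⟩
  obtain ⟨l, hl, hne⟩ := hrun (a + k)
  simp only [length_replicate, length_seg] at hk
  have := hget l (by simp; omega)
  rw [getElem?_eq_getElem (by simp; omega), getElem_seg, getElem_replicate] at this
  exact hne (by simpa [Nat.add_comm l, Nat.add_assoc] using this)

theorem AgreesWithBlocks.exists_seg_eq (h : AgreesWithBlocks ρ u) :
    ∃ S : ℕ → ℕ, S 0 = 0 ∧ ∀ n, S (n + 1) = S n + (u n).length ∧ seg ρ (S n) (S (n + 1)) = u n := by
  refine ⟨fun n => (((range n).map u).flatten).length, by simp, fun n => ?_⟩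
  have hflat : ((range (n + 1)).map u).flatten = ((range n).map u).flatten ++ u n := by
    simp [range_succ]
  have h' := h (n + 1)
  simp only [hflat, length_append, pref_add_s18, h n, true_and] at h' ⊢
  exact append_cancel_left h'

theorem agreesWithBlocks_of_seg_eq {S : ℕ → ℕ} (h0 : S 0 = 0) (hS : Monotone S)
    (hu : ∀ n, u n = seg ρ (S n) (S (n + 1))) : AgreesWithBlocks ρ u := by
  have hflat : ∀ n, ((range n).map u).flatten = pref ρ (S n) := by
    intro n
    induction n with
    | zero => simp [pref, h0]
    | succ n ih =>
      rw [range_succ, map_append, flatten_append, ih, map_singleton,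
        flatten_singleton, hu, pref_eq_seg, pref_eq_seg,
        seg_append ρ (h0 ▸ hS n.zero_le) (hS n.le_succ)]
  intro n
  rw [hflat, length_pref]

end Segments

section Periodic

variable {V : Type*}

/-- The default `d` is only read when `u = []`. -/
def periodicWord (u : List V) (d : V) (i : ℕ) : V :=
  u.getD (i % u.length) d

theorem periodicWord_mul_add (u : List V) (d : V) (k : ℕ) {i : ℕ} (hi : i < u.length) :
    periodicWord u d (k * u.length + i) = u[i] := by
  rw [periodicWord, Nat.mul_add_mod_self_right, Nat.mod_eq_of_lt hi, getD_eq_getElem]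

theorem seg_periodicWord (u : List V) (d : V) (k : ℕ) {s t : ℕ} (hst : s ≤ t)
    (ht : t ≤ u.length) :
    seg (periodicWord u d) (k * u.length + s) (k * u.length + t) = (u.take t).drop s := by
  apply ext_getElem (by simp; omega)
  intro i hi _
  simp only [length_seg] at hi
  rw [getElem_seg, getElem_drop, getElem_take, Nat.add_assoc]
  exact periodicWord_mul_add u d k (by omega)

theorem periodicWord_append_comm (x y : List V) (d : V) (i : ℕ) :
    periodicWord (x ++ y) d i = periodicWord (y ++ x) d (i + y.length) := by
  have hlen : (y ++ x).length = (x ++ y).length := by simp [Nat.add_comm]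
  rcases Nat.eq_zero_or_pos (x ++ y).length with h0 | hpos
  · simp_all [periodicWord]
  obtain ⟨k, t, ht, rfl⟩ : ∃ k t, t < (x ++ y).length ∧ i = k * (x ++ y).length + t :=
    ⟨_, _, Nat.mod_lt i hpos, (Nat.div_add_mod' i _).symm⟩
  rw [periodicWord_mul_add _ _ _ ht]
  rcases lt_or_ge t x.length with htx | htx
  · rw [Nat.add_assoc, ← hlen, periodicWord_mul_add _ _ _ (by simp at ht ⊢; omega)]
    simp [htx]
  · have hi : k * (x ++ y).length + t + y.length = (k + 1) * (y ++ x).length + (t - x.length) := by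
      simp only [hlen, Nat.succ_mul, length_append] at ht ⊢
      omega
    simp only [length_append] at ht
    rw [hi, periodicWord_mul_add _ _ _ (by simp; omega), getElem_append_right htx,
      getElem_append_left]

theorem consPositional_periodicWord (f : V → List V) {x : List V} {v : V}
    (hx : x.getLast? = some v) (d : V) : ConsPositional f (periodicWord (x ++ f v) d) := by
  have hx0 : 0 < x.length := by
    cases x <;> simp_all
  have hlast : ∀ k, periodicWord (x ++ f v) d (k * (x ++ f v).length + x.length - 1) = v := by
    intro k
    rw [getLast?_eq_getElem?, getElem?_eq_getElem (by omega)] at hx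
    rw [Nat.add_sub_assoc hx0, periodicWord_mul_add _ _ _ (by simp; omega),
      getElem_append_left (by omega), Option.some_inj.mp hx]
  refine ⟨fun k => k * (x ++ f v).length + x.length, by simp; omega, fun k => ?_⟩
  simp only [hlast]
  refine ⟨?_, ?_⟩
  · rw [pref_add_s18, Nat.add_assoc, seg_periodicWord _ _ _ (by omega) (by simp),
      take_of_length_le (by simp), drop_left]
  · simp only [length_append, Nat.succ_mul]
    omega

theorem periodicWord_replicate_append_exists_ne {x d : V} {m : ℕ} {w : List V}
    (hm : w.length < m) (hne : w ≠ []) (hhead : w.head? ≠ some x) (hlast : w.getLast? ≠ some x)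
    (p : ℕ) : ∃ l ≤ m, periodicWord (replicate m x ++ w) d (p + l) ≠ x := by
  set u := replicate m x ++ w
  have hu : u.length = m + w.length := by simp [u]
  have hw0 : 0 < w.length := length_pos_iff.mpr hne
  obtain ⟨k, t, ht, rfl⟩ : ∃ k t, t < u.length ∧ p = k * u.length + t :=
    ⟨_, _, Nat.mod_lt p (by omega), (Nat.div_add_mod' p _).symm⟩
  rcases lt_or_ge t m with htm | htm
  · refine ⟨m - t, by omega, ?_⟩
    rw [Nat.add_assoc, periodicWord_mul_add _ _ _ (by omega), getElem_append_right (by simp; omega)]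
    simpa [head?_eq_getElem?, getElem?_eq_getElem hw0, htm.le] using hhead
  · refine ⟨u.length - 1 - t, by omega, ?_⟩
    rw [Nat.add_assoc, periodicWord_mul_add _ _ _ (by omega), getElem_append_right (by simp; omega)]
    simpa [getLast?_eq_getElem?, getElem?_eq_getElem (show w.length - 1 < w.length by omega),
      show t + (u.length - 1 - t) - m = w.length - 1 by omega] using hlast

theorem replicate_append_take_suffix_seg_periodicWord {x d : V} {m : ℕ} {w : List V} {a k r : ℕ}
    (hr : r ≤ w.length) (ha : a ≤ k * (replicate m x ++ w).length) :
    replicate m x ++ w.take r <:+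
      seg (periodicWord (replicate m x ++ w) d) a (k * (replicate m x ++ w).length + (m + r)) := by
  have h := seg_periodicWord (replicate m x ++ w) d k (Nat.zero_le (m + r)) (by simp; omega)
  have ht : take (m + r) (replicate m x ++ w) = replicate m x ++ take r w := by
    simpa using take_length_add_append (l₁ := replicate m x) (l₂ := w) r
  rw [Nat.add_zero, drop_zero, ht] at h
  rw [← seg_append _ ha (Nat.le_add_right _ _), h]
  exact suffix_append _ _

end Periodic

end BMGame

theorem List.exists_eq_replicate_append_append_replicate {α : Type*} [DecidableEq α]
    (l : List α) (x : α) :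
    ∃ a w b, l = replicate a x ++ w ++ replicate b x ∧ w.head? ≠ some x ∧ w.getLast? ≠ some x := by
  have hr := head?_dropWhile_not (· == x) l
  set r := l.dropWhile (· == x)
  refine ⟨(l.takeWhile (· == x)).length, r.rdropWhile (· == x), (r.rtakeWhile (· == x)).length,
    ?_, ?_, ?_⟩
  · have ht : l.takeWhile (· == x) = replicate _ x :=
      eq_replicate_iff.mpr ⟨rfl, fun y hy => by simpa using mem_takeWhile_imp hy⟩
    have hs : r.rtakeWhile (· == x) = replicate _ x :=
      eq_replicate_iff.mpr ⟨rfl, fun y hy => by simpa using mem_rtakeWhile_imp hy⟩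
    rw [← ht, ← hs, append_assoc, rdropWhile_append_rtakeWhile, takeWhile_append_dropWhile]
  · rw [prefix_iff_eq_take.mp (rdropWhile_prefix _ r), head?_take]
    split_ifs with h0
    · simp
    · intro h
      simp [h] at hr
  · intro h
    have hne : r.rdropWhile (· == x) ≠ [] := by
      rintro h'
      simp [h'] at h
    have hlast := rdropWhile_last_not _ _ hne
    simp_all [getLast?_eq_some_getLast hne]

theorem exists_div_lt_div_of_strictMono {q : ℕ → ℕ} (hq : StrictMono q) {P : ℕ} (hP : 0 < P) :
    ∃ n, q n / P < q (n + 1) / P := by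
  by_contra! h
  set N := (q 0 / P + 1) * P
  have hbound : q N / P ≤ q 0 / P := antitone_nat_of_succ_le (f := fun n => q n / P) h N.zero_le
  have hN : N / P ≤ q N / P := Nat.div_le_div_right (hq.id_le N)
  rw [Nat.mul_div_cancel _ hP] at hN
  omega

theorem isChain_E3 (l : List (Fin 3)) : l.IsChain E3 :=
  isChain_iff_getElem.mpr fun _ _ => trivial

def decodeWord (m : ℕ) : List (Fin 3) :=
  (Encodable.decode m.unpair.1 : Option (List (Fin 3))).getD []

theorem exists_le_decodeWord_eq (w : List (Fin 3)) (N : ℕ) : ∃ m, N ≤ m ∧ decodeWord m = w :=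
  ⟨Nat.pair (Encodable.encode w) N, Nat.right_le_pair _ _, by simp [decodeWord, Encodable.encodek]⟩

structure Predicts (τ : List (Fin 3)) (m j : ℕ) : Prop where
  length_lt : (decodeWord m).length < m
  lt_length : j < (decodeWord m).length
  head?_ne : (decodeWord m).head? ≠ some 2
  suffix : replicate m 2 ++ (decodeWord m).take j <:+ τ
  not_infix : ¬ replicate (m + 1) 2 <:+: τ

namespace Predicts

variable {τ : List (Fin 3)} {m j m' j' : ℕ}

theorem le (h : Predicts τ m j) (h' : Predicts τ m' j') : m ≤ m' := by
  by_contra hlt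
  have hrun : replicate (m' + 1) (2 : Fin 3) <+: replicate m 2 := by
    rw [show m = m' + 1 + (m - (m' + 1)) by omega, replicate_add (m' + 1)]
    exact prefix_append _ _
  exact h'.not_infix (hrun.isInfix.trans ((prefix_append _ _).isInfix.trans h.suffix.isInfix))

theorem not_lt (h : Predicts τ m j) (h' : Predicts τ m j') : ¬ j < j' := by
  intro hjj
  obtain ⟨hm, hj', hhead, hsuff', -⟩ := h'
  obtain ⟨x, hx⟩ := suffix_of_suffix_length_le h.suffix hsuff' (by simp; omega)
  have hxlen : x.length = j' - j := by
    have := congrArg length hx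
    simp at this
    omega
  -- letter `m` of the longer suffix heads `decodeWord m` but lies in the shorter one's `2^m`
  apply hhead
  have h2 := congrArg (·[m]?) hx
  simp only [getElem?_append_right (show x.length ≤ m by omega), getElem?_append_left
    (show m - x.length < (replicate m (2 : Fin 3)).length by simp; omega), getElem?_replicate,
    getElem?_append_right (show (replicate m (2 : Fin 3)).length ≤ m by simp),
    length_replicate, Nat.sub_self, if_pos (show m - x.length < m by omega)] at h2
  rw [head?_eq_getElem?, h2, getElem?_take_of_lt (by omega)]

theorem unique (h : Predicts τ m j) (h' : Predicts τ m' j') : m = m' ∧ j = j' := by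
  obtain rfl := le_antisymm (h.le h') (h'.le h)
  exact ⟨rfl, le_antisymm (Nat.not_lt.mp (h'.not_lt h)) (Nat.not_lt.mp (h.not_lt h'))⟩

end Predicts

open Classical in
noncomputable def phi (τ : List (Fin 3)) : Fin 3 :=
  if h : ∃ p : ℕ × ℕ, Predicts τ p.1 p.2 then
    if (decodeWord h.choose.1).getD h.choose.2 0 = 0 then 1 else 0
  else 0

theorem phi_eq_zero_or_one (τ : List (Fin 3)) : phi τ = 0 ∨ phi τ = 1 := by
  unfold phi
  split_ifs <;> simp

theorem phi_ne_of_predicts {τ : List (Fin 3)} {m j : ℕ} (h : Predicts τ m j) :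
    phi τ ≠ (decodeWord m).getD j 0 := by
  have hex : ∃ p : ℕ × ℕ, Predicts τ p.1 p.2 := ⟨(m, j), h⟩
  obtain ⟨hm, hj⟩ := hex.choose_spec.unique h
  rw [phi, dif_pos hex, hm, hj]
  split_ifs with h0
  · rw [h0]
    decide
  · exact fun h => h0 h.symm

theorem lastMoveWinning_phi : LastMoveWinning E3 2 (W18 phi) fun π => [phi π] := by
  refine ⟨fun π _ _ => ⟨cons_ne_nil _ _, isChain_E3 _⟩, ?_⟩
  rintro ρ ⟨hρ0, -⟩ ⟨s, e, hs0, hse, hmove⟩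
  have hs : ∀ i, s (i + 1) = e i + 1 := fun i => by simpa using (hmove i).2
  have he : ∀ i, ρ (e i) = phi (seg ρ (s i) (e i)) := fun i => by simpa [seg] using (hmove i).1
  refine ⟨fun i => seg ρ (s i) (e i), fun i => ne_nil_of_length_pos (by simpa using hse i),
    by simp [seg, hs0, head?_range, (hs0 ▸ hse 0).ne', hρ0],
    agreesWithBlocks_of_seg_eq hs0 ?_ fun i => ?_⟩
  · exact monotone_nat_of_le_succ fun i => by have := hse i; have := hs i; omega
  · rw [hs, seg_add_one ρ (hse i).le, he]

/-- `q` lists the positions of Player 0's letters in a decomposition `π₁ φ(π₁) π₂ φ(π₂) ⋯`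
of `ρ`, forgetting the first block. -/
def IsCutSeq (φ : List (Fin 3) → Fin 3) (ρ : ℕ → Fin 3) (q : ℕ → ℕ) : Prop :=
  StrictMono q ∧ (∀ n, ρ (q n) ∈ Set.range φ) ∧
    ∀ n, ρ (q (n + 1)) = φ (seg ρ (q n + 1) (q (n + 1)))

theorem exists_isCutSeq_of_mem_W18 {φ : List (Fin 3) → Fin 3} {ρ : ℕ → Fin 3}
    (h : ρ ∈ W18 φ) : ∃ q, IsCutSeq φ ρ q := by
  obtain ⟨π, hne, -, hagree⟩ := h
  obtain ⟨S, -, hS⟩ := hagree.exists_seg_eq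
  have hnext : ∀ n, S (n + 1) = S n + (π n).length + 1 := fun n => by simp [(hS n).1]; omega
  have hblock : ∀ n, seg ρ (S n) (S n + (π n).length) = π n ∧ ρ (S n + (π n).length) = φ (π n) := by
    intro n
    have := (hS n).2
    rw [hnext, seg_add_one ρ (Nat.le_add_right _ _)] at this
    simpa using this
  refine ⟨fun n => S n + (π n).length, strictMono_nat_of_lt_succ fun n => ?_,
    fun n => ⟨_, (hblock n).2.symm⟩, fun n => ?_⟩
  · have := length_pos_iff.mpr (hne (n + 1))
    simp only [hnext]
    omega
  · simp only [← hnext, (hblock (n + 1)).1, (hblock (n + 1)).2]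

theorem IsCutSeq.of_comp_add {φ : List (Fin 3) → Fin 3} {ρ : ℕ → Fin 3} {q : ℕ → ℕ} {b : ℕ}
    (h : IsCutSeq φ (fun i => ρ (i + b)) q) : IsCutSeq φ ρ fun n => q n + b := by
  obtain ⟨hq, hrange, hcut⟩ := h
  refine ⟨fun _ _ hn => Nat.add_lt_add_right (hq hn) b, hrange, fun n => ?_⟩
  simpa only [seg_comp_add, Nat.add_right_comm] using hcut n

theorem not_isCutSeq_periodicWord {m : ℕ} {w : List (Fin 3)} (hw : decodeWord m = w)
    (hm : w.length < m) (hhead : w.head? ≠ some 2) (hlast : w.getLast? ≠ some 2) (q : ℕ → ℕ) :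
    ¬ IsCutSeq phi (periodicWord (replicate m 2 ++ w) 0) q := by
  rintro ⟨hq, hrange, hcut⟩
  set u := replicate m (2 : Fin 3) ++ w
  have hu : u.length = m + w.length := by simp [u]
  have hP : 0 < u.length := by omega
  have hcopy : ∀ n, ∃ r < w.length, q n = q n / u.length * u.length + (m + r) := by
    intro n
    have hmod := Nat.mod_lt (q n) hP
    have hq := Nat.div_add_mod' (q n) u.length
    by_cases h : q n % u.length < m
    · obtain ⟨τ, hτ⟩ := hrange n
      have := phi_eq_zero_or_one τ
      rw [hτ, ← hq, periodicWord_mul_add _ _ _ hmod, getElem_append_left (by simpa),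
        getElem_replicate] at this
      simp at this
    · exact ⟨q n % u.length - m, by omega, by omega⟩
  have hwne : w ≠ [] := by
    obtain ⟨r, hr, -⟩ := hcopy 0
    exact ne_nil_of_length_pos (by omega)
  obtain ⟨n, hn⟩ := exists_div_lt_div_of_strictMono hq hP
  obtain ⟨r, hr, hQ⟩ := hcopy (n + 1)
  have hpred : Predicts (seg (periodicWord u 0) (q n + 1) (q (n + 1))) m r := by
    subst hw
    rw [hQ]
    exact ⟨hm, hr, hhead, replicate_append_take_suffix_seg_periodicWord hr.le
      (Nat.lt_mul_of_div_lt hn hP), not_replicate_infix_seg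
      (periodicWord_replicate_append_exists_ne hm hwne hhead hlast) _ _⟩
  apply phi_ne_of_predicts hpred
  rw [← hcut n, hQ, periodicWord_mul_add _ _ _ (by omega), getElem_append_right (by simp), hw,
    getD_eq_getElem _ _ hr]
  simp

theorem not_positionalWinning_phi (f : Fin 3 → List (Fin 3)) :
    ¬ PositionalWinning E3 2 (W18 phi) f := by
  rintro ⟨-, hwin⟩
  obtain ⟨a, w, b, hf, hhead, hlast⟩ := (f 2).exists_eq_replicate_append_append_replicate 2
  obtain ⟨m, hm, hw⟩ := exists_le_decodeWord_eq w (a + b + w.length + 1)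
  have hrot : replicate (m - a - b) 2 ++ f 2 = (replicate (m - b) 2 ++ w) ++ replicate b 2 := by
    rw [hf, ← append_assoc, ← append_assoc, ← replicate_add, show m - a - b + a = m - b by omega]
  have hρ : periodicWord (replicate (m - a - b) 2 ++ f 2) 0 =
      fun i => periodicWord (replicate m 2 ++ w) 0 (i + b) := by
    funext i
    rw [hrot, periodicWord_append_comm, length_replicate, ← append_assoc, ← replicate_add,
      show b + (m - b) = m by omega]
  have hplay : IsPlay E3 2 (periodicWord (replicate (m - a - b) 2 ++ f 2) 0) :=
    ⟨by simp [periodicWord, show 0 < m - a - b by omega], fun _ => trivial⟩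
  have hcons := consPositional_periodicWord f (x := replicate (m - a - b) 2) (v := 2)
    (by simp [getLast?_replicate]; omega) 0
  obtain ⟨q, hq⟩ := exists_isCutSeq_of_mem_W18 (hwin _ hplay hcons)
  rw [hρ] at hq
  exact not_isCutSeq_periodicWord hw (by omega) hhead hlast _ hq.of_comp_add

/-- There is a function `φ` from the nonempty finite words over `{0,1,2}` to `{0,1}` such
that, in the game `(G_{0,1,2}, 2, W18 φ)`, Player 0 has a `1`-bounded last-move winning
strategy but no positional winning strategy. -/
theorem stmt18 :
    ∃ φ : List (Fin 3) → Fin 3, (∀ l, φ l = 0 ∨ φ l = 1) ∧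
      (∃ g : List (Fin 3) → List (Fin 3), LastMoveWinning E3 2 (W18 φ) g ∧
        ∀ l, l ≠ [] → (g l).length = 1) ∧
      ¬ ∃ f : Fin 3 → List (Fin 3), PositionalWinning E3 2 (W18 φ) f :=
  ⟨phi, phi_eq_zero_or_one, ⟨_, lastMoveWinning_phi, fun _ _ => rfl⟩,
    fun ⟨f, hf⟩ => not_positionalWinning_phi f hf⟩
end
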